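/- Let G be a finite group, S ⊆ G, Γ = BCay(G,S), and let A⁺ be the subgroup of Aut(Γ) preserving the bipartition class G × {0} setwise. Suppose A_{(1,0)} = A_{(1,1)} (equal vertex stabilizers of (1_G,0) and (1_G,1)) and that there is τ ∈ Aut(Γ) swapping the classes and normalizing Ĝ, with orbits of size 2 of the form {(x,0),(x,1)}. Then the induced action of A⁺ on G via the block system {{(x,0),(x,1)} : x ∈ G} is faithful, and its image equals Aut(Cay(G,S)). -/

import Mathlib

/-! Conjugating an automorphism by the right translations `Ĝ` moves any vertex `(x,0)` to
`(1,0)`, so equality of the stabilisers of `(1,0)` and `(1,1)` forces an automorphism sending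
`(x,0)` to `(y,0)` to send `(x,1)` to `(y,1)`. Hence every element of `A⁺` is `ρ × id` for a
permutation `ρ` of `G`, and adjacency between the two layers of `BCay(G,S)` says exactly that `ρ`
is an automorphism of `Cay(G,S)`; conversely `ρ × id` is an automorphism of `BCay(G,S)` for every
`ρ ∈ Aut(Cay(G,S))`. -/

def biCayley (G : Type*) [Group G] (S : Set G) : SimpleGraph (G × Bool) where
  Adj v w := (v.2 = false ∧ w.2 = true ∧ w.1 * v.1⁻¹ ∈ S) ∨
             (v.2 = true ∧ w.2 = false ∧ v.1 * w.1⁻¹ ∈ S)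
  symm := ⟨fun v w h => by tauto⟩
  loopless := ⟨fun v h => by rcases h with ⟨h1,h2,_⟩|⟨h1,h2,_⟩ <;> simp [h1] at h2⟩

def biTrans (G : Type*) [Group G] : G →* Equiv.Perm (G × Bool) where
  toFun g := ⟨fun v => (v.1 * g⁻¹, v.2), fun v => (v.1 * g, v.2),
    fun v => by simp, fun v => by simp⟩
  map_one' := by ext v <;> simp
  map_mul' a b := by ext v <;> simp [mul_assoc]

def graphAut {V : Type*} (Γ : SimpleGraph V) : Subgroup (Equiv.Perm V) where
  carrier := {f | ∀ a b, Γ.Adj a b ↔ Γ.Adj (f a) (f b)}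
  one_mem' := by intro a b; simp
  mul_mem' := by
    intro f g hf hg a b
    exact (hg a b).trans (hf (g a) (g b))
  inv_mem' := by
    intro f hf a b
    simpa using (hf (f⁻¹ a) (f⁻¹ b)).symm

def cayAdj {G : Type*} [Group G] (S : Set G) (x y : G) : Prop := y * x⁻¹ ∈ S

def cayAut (G : Type*) [Group G] (S : Set G) : Subgroup (Equiv.Perm G) where
  carrier := {f | ∀ x y, cayAdj S x y ↔ cayAdj S (f x) (f y)}
  one_mem' := by intro a b; simp
  mul_mem' := by
    intro f g hf hg a b
    exact (hg a b).trans (hf (g a) (g b))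
  inv_mem' := by
    intro f hf a b
    simpa using (hf (f⁻¹ a) (f⁻¹ b)).symm

def cayIso {G : Type*} [Group G] (S T : Set G) : Prop :=
  ∃ e : Equiv.Perm G, ∀ x y, cayAdj S x y ↔ cayAdj T (e x) (e y)

def isCI (G : Type*) [Group G] (S : Set G) : Prop :=
  ∀ T : Set G, cayIso S T → ∃ α : G ≃* G, T = α '' S

section BiCayley

variable {G : Type*} [Group G] {S : Set G}

@[simp]
lemma biTrans_apply (g : G) (v : G × Bool) : biTrans G g v = (v.1 * g⁻¹, v.2) := rfl

lemma biTrans_inv_apply (g : G) (v : G × Bool) : (biTrans G g)⁻¹ v = (v.1 * g, v.2) := by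
  rw [← map_inv, biTrans_apply, inv_inv]

lemma biCayley_adj_iff (x y : G) (a b : Bool) :
    (biCayley G S).Adj (x, a) (y, b) ↔
      (a = false ∧ b = true ∧ cayAdj S x y) ∨ (a = true ∧ b = false ∧ cayAdj S y x) :=
  Iff.rfl

lemma biTrans_mem_graphAut (g : G) : biTrans G g ∈ graphAut (biCayley G S) := by
  rintro ⟨x, a⟩ ⟨y, b⟩
  simp only [biTrans_apply, biCayley_adj_iff, cayAdj, mul_inv_rev, inv_inv,
    mul_assoc, inv_mul_cancel_left]

lemma prodCongr_refl_mem_graphAut {ρ : Equiv.Perm G} (hρ : ρ ∈ cayAut G S) :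
    ρ.prodCongr (Equiv.refl Bool) ∈ graphAut (biCayley G S) := by
  rintro ⟨x, a⟩ ⟨y, b⟩
  simp only [Equiv.prodCongr_apply, Equiv.coe_refl, Prod.map_apply, id, biCayley_adj_iff,
    ← hρ x y, ← hρ y x]

variable
  (hstab : ∀ f ∈ graphAut (biCayley G S),
    (f ((1 : G), false) = ((1 : G), false) ↔ f ((1 : G), true) = ((1 : G), true)))
include hstab

lemma apply_true_eq_of_apply_false_eq {σ : Equiv.Perm (G × Bool)}
    (hσ : σ ∈ graphAut (biCayley G S)) {x y : G} (h : σ (x, false) = (y, false)) :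
    σ (x, true) = (y, true) := by
  set γ := biTrans G y * σ * (biTrans G x)⁻¹
  have hγ : γ ∈ graphAut (biCayley G S) :=
    mul_mem (mul_mem (biTrans_mem_graphAut y) hσ) (inv_mem (biTrans_mem_graphAut x))
  have hγ_apply (b : Bool) : γ (1, b) = ((σ (x, b)).1 * y⁻¹, (σ (x, b)).2) := by
    simp [γ, Equiv.Perm.mul_apply, biTrans_inv_apply]
  have hfix : γ (1, true) = (1, true) := (hstab γ hγ).1 (by rw [hγ_apply, h]; simp)
  rw [hγ_apply, Prod.mk.injEq, mul_inv_eq_one] at hfix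
  exact Prod.ext hfix.1 hfix.2

lemma exists_perm_of_mapsTo_false {σ : Equiv.Perm (G × Bool)}
    (hσ : σ ∈ graphAut (biCayley G S)) (hpres : ∀ x : G, (σ (x, false)).2 = false) :
    ∃ ρ : Equiv.Perm G, ∀ x b, σ (x, b) = (ρ x, b) := by
  set f : G → G := fun x => (σ (x, false)).1
  have hfalse (x : G) : σ (x, false) = (f x, false) := Prod.ext rfl (hpres x)
  have htrue (x : G) : σ (x, true) = (f x, true) :=
    apply_true_eq_of_apply_false_eq hstab hσ (hfalse x)
  have hinj : Function.Injective f := by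
    intro x y hxy
    have : σ (x, false) = σ (y, false) := by rw [hfalse x, hxy, ← hfalse y]
    exact congrArg Prod.fst (σ.injective this)
  have hsurj : Function.Surjective f := by
    intro y
    obtain ⟨⟨z, b⟩, hz⟩ := σ.surjective (y, false)
    cases b with
    | false => exact ⟨z, by rw [hfalse] at hz; exact congrArg Prod.fst hz⟩
    | true => simp [htrue] at hz
  refine ⟨Equiv.ofBijective f ⟨hinj, hsurj⟩, fun x b => ?_⟩
  cases b
  exacts [hfalse x, htrue x]

end BiCayley

theorem stmt_18_general {G : Type*} [Group G] (S : Set G)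
    (hstab : ∀ f ∈ graphAut (biCayley G S),
      (f ((1 : G), false) = ((1 : G), false) ↔ f ((1 : G), true) = ((1 : G), true))) :
    (∀ σ ∈ graphAut (biCayley G S), (∀ x : G, (σ (x, false)).2 = false) →
      ∃ ρ ∈ cayAut G S, ∀ x : G, σ (x, false) = (ρ x, false) ∧ σ (x, true) = (ρ x, true)) ∧
    (∀ σ ∈ graphAut (biCayley G S), ∀ σ' ∈ graphAut (biCayley G S),
      (∀ x : G, (σ (x, false)).2 = false) → (∀ x : G, (σ' (x, false)).2 = false) →
      (∀ x : G, (σ (x, false)).1 = (σ' (x, false)).1) → σ = σ') ∧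
    (∀ ρ ∈ cayAut G S, ∃ σ ∈ graphAut (biCayley G S),
      ∀ x : G, σ (x, false) = (ρ x, false) ∧ σ (x, true) = (ρ x, true)) := by
  refine ⟨fun σ hσ hpres => ?_, fun σ hσ σ' hσ' hpres hpres' hagree => ?_,
    fun ρ hρ => ⟨_, prodCongr_refl_mem_graphAut hρ, fun x => ⟨rfl, rfl⟩⟩⟩
  · obtain ⟨ρ, hρ⟩ := exists_perm_of_mapsTo_false hstab hσ hpres
    refine ⟨ρ, fun x y => ?_, fun x => ⟨hρ x false, hρ x true⟩⟩
    simpa [hρ, biCayley_adj_iff] using hσ (x, false) (y, true)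
  · obtain ⟨ρ, hρ⟩ := exists_perm_of_mapsTo_false hstab hσ hpres
    obtain ⟨ρ', hρ'⟩ := exists_perm_of_mapsTo_false hstab hσ' hpres'
    have hρρ' (x : G) : ρ x = ρ' x := by simpa [hρ, hρ'] using hagree x
    ext1 ⟨x, b⟩
    rw [hρ, hρ', hρρ']

theorem stmt_18 {G : Type*} [Group G] [Fintype G] (S : Set G)
    (hstab : ∀ f ∈ graphAut (biCayley G S),
      (f ((1 : G), false) = ((1 : G), false) ↔ f ((1 : G), true) = ((1 : G), true)))
    (τ : Equiv.Perm (G × Bool)) (hτA : τ ∈ graphAut (biCayley G S))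
    (hτnorm : ∀ a : G, ∃ b : G, τ * biTrans G a * τ⁻¹ = biTrans G b)
    (hτswap : ∀ x : G, τ (x, false) = (x, true) ∧ τ (x, true) = (x, false)) :
    (∀ σ ∈ graphAut (biCayley G S), (∀ x : G, (σ (x, false)).2 = false) →
      ∃ ρ ∈ cayAut G S, ∀ x : G, σ (x, false) = (ρ x, false) ∧ σ (x, true) = (ρ x, true)) ∧
    (∀ σ ∈ graphAut (biCayley G S), ∀ σ' ∈ graphAut (biCayley G S),
      (∀ x : G, (σ (x, false)).2 = false) → (∀ x : G, (σ' (x, false)).2 = false) →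
      (∀ x : G, (σ (x, false)).1 = (σ' (x, false)).1) → σ = σ') ∧
    (∀ ρ ∈ cayAut G S, ∃ σ ∈ graphAut (biCayley G S),
      ∀ x : G, σ (x, false) = (ρ x, false) ∧ σ (x, true) = (ρ x, true)) :=
  stmt_18_general S hstab
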